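/- Let G be a finite group acting linearly on W over a field F with char F not dividing |G|. Then β(G,W) ≤ b(G,W) + 1, where b(G,W) is the top degree of the coinvariant algebra S(W)/(S(W)_+^G S(W)). -/

import Mathlib

noncomputable section
open MvPolynomial

variable {F : Type} [Field F]

/-- The algebra homomorphism between polynomial algebras (viewed as symmetric algebras)
induced by a linear map between the spaces of variables (the degree one components). -/
noncomputable def algOf {α β : Type} [Fintype α] [Fintype β] [DecidableEq α]
    (f : (α → F) →ₗ[F] (β → F)) :
    MvPolynomial α F →ₐ[F] MvPolynomial β F :=
  aeval fun j => ∑ i, f (Pi.single j 1) i • X i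

/-- The embedding of the space of linear forms into the polynomial algebra. -/
noncomputable def lin {β : Type} [Fintype β] (w : β → F) : MvPolynomial β F :=
  ∑ i, w i • X i

/-- The subalgebra of `G`-invariants of the symmetric algebra of a representation. -/
def invariants {G : Type} [Group G] {α : Type} [Fintype α] [DecidableEq α]
    (ρ : Representation F G (α → F)) : Subalgebra F (MvPolynomial α F) where
  carrier := {p | ∀ g : G, algOf (ρ g) p = p}
  mul_mem' := fun ha hb g => by rw [map_mul, ha g, hb g]
  add_mem' := fun ha hb g => by rw [map_add, ha g, hb g]
  algebraMap_mem' := fun r g => (algOf (ρ g)).commutes r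

variable {G : Type} [Group G] {α : Type} [Fintype α] [DecidableEq α]

/-- The invariant ring is generated as an `F`-algebra in degrees at most `d`. -/
def genLE (ρ : Representation F G (α → F)) (d : ℕ) : Prop :=
  Algebra.adjoin F {p : MvPolynomial α F | p ∈ invariants ρ ∧ p.totalDegree ≤ d}
    = invariants ρ

/-- The Noether number `β(G,W)` of a representation. -/
def noether (ρ : Representation F G (α → F)) : ℕ := sInf {d | genLE ρ d}

/-- The Hilbert ideal: the ideal of `S(W)` generated by the invariants of positive degree. -/
def hilbertIdeal (ρ : Representation F G (α → F)) : Ideal (MvPolynomial α F) :=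
  Ideal.span {p | p ∈ invariants ρ ∧ constantCoeff p = 0}

/-- `b(G,W)`: the top degree of the algebra of coinvariants `S(W)/S(W)₊^G S(W)`. -/
def coinvTop (ρ : Representation F G (α → F)) : ℕ :=
  sSup {d | ∃ p : MvPolynomial α F, p.IsHomogeneous d ∧ p ∉ hilbertIdeal ρ}

/-- `b_k(G,W)`: the top degree of `S(W)/((S(W)₊^G)^k S(W))`. -/
def coinvTopK (ρ : Representation F G (α → F)) (k : ℕ) : ℕ :=
  sSup {d | ∃ p : MvPolynomial α F, p.IsHomogeneous d ∧ p ∉ (hilbertIdeal ρ) ^ k}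

/-- The span of all products of `k` positive-degree invariants,
i.e. `(S(W)₊^G)^k` computed inside the invariant ring. -/
def prodPow (ρ : Representation F G (α → F)) (k : ℕ) : Submodule F (MvPolynomial α F) :=
  Submodule.span F {x | ∃ f : Fin k → MvPolynomial α F,
    (∀ i, f i ∈ invariants ρ ∧ constantCoeff (f i) = 0) ∧ x = ∏ i, f i}

/-- The `k`-th Noether number `β_k(G,W)`, the top degree of `S(W)^G/(S(W)₊^G)^{k+1}`. -/
def noetherK (ρ : Representation F G (α → F)) (k : ℕ) : ℕ :=
  sSup {d | ∃ p, p ∈ invariants ρ ∧ p.IsHomogeneous d ∧ p ∉ prodPow ρ (k+1)}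

/-- `β(G)`: the supremum of the Noether numbers over all finite dimensional modules. -/
def noetherSup (F G : Type) [Field F] [Group G] : ℕ∞ :=
  ⨆ (n : ℕ) (ρ : Representation F G (Fin n → F)), (noether ρ : ℕ∞)

/-- `b(G)`: the supremum of `b(G,W)` over all finite dimensional modules. -/
def coinvSup (F G : Type) [Field F] [Group G] : ℕ∞ :=
  ⨆ (n : ℕ) (ρ : Representation F G (Fin n → F)), (coinvTop ρ : ℕ∞)

/-- `β_k(G)`: the supremum of the `k`-th Noether numbers over all modules. -/
def noetherKSup (F G : Type) [Field F] [Group G] (k : ℕ) : ℕ∞ :=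
  ⨆ (n : ℕ) (ρ : Representation F G (Fin n → F)), (noetherK ρ k : ℕ∞)

/-!
Let `b = coinvTop ρ` and let `p` be a homogeneous invariant of degree `m + 1 > b + 1`. Each monomial
of `p` is a variable times a form of degree `m > b`, and such a form lies in the Hilbert ideal,
so `p = ∑ fⱼ hⱼ` with `fⱼ` homogeneous invariants of degrees `0 < dⱼ ≤ m` and `hⱼ` forms of
degree `m + 1 - dⱼ ≥ 1`. Applying the Reynolds operator, `p = ∑ fⱼ τ(hⱼ)`, a sum of products of
invariants of degree `≤ m`; induction on the degree finishes the proof.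

As `coinvTop` is an `sSup` in `ℕ`, this needs the degrees of forms outside the Hilbert ideal to be
bounded. They are: `Xᵢ` is a root of the monic polynomial `∏_g (t - g • Xᵢ)`, whose lower
coefficients lie in the Hilbert ideal, so `Xᵢ ^ |G|` lies in it too.
-/

namespace MvPolynomial

attribute [local instance] MvPolynomial.gradedAlgebra

theorem homogeneousComponent_mul_of_isHomogeneous {σ R : Type*} [CommSemiring R]
    {a b : MvPolynomial σ R} {d : ℕ} (hb : b.IsHomogeneous d) (n : ℕ) :
    homogeneousComponent n (a * b) =
      if d ≤ n then homogeneousComponent (n - d) a * b else 0 := by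
  have hb' : b ∈ homogeneousSubmodule σ R d := hb
  split_ifs with h
  · rw [← decomposition.decompose'_apply, ← decomposition.decompose'_apply]
    exact DirectSum.coe_decompose_mul_of_right_mem_of_le _ hb' h
  · rw [← decomposition.decompose'_apply]
    exact DirectSum.coe_decompose_mul_of_right_mem_of_not_le _ hb' h

theorem homogeneousComponent_mem_span_of_mem_ideal_span {σ R : Type*} [CommSemiring R]
    {S : ℕ → Set (MvPolynomial σ R)} (hS : ∀ d, ∀ s ∈ S d, s.IsHomogeneous d)
    {p : MvPolynomial σ R} (hp : p ∈ Ideal.span (⋃ d, S d)) (n : ℕ) :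
    homogeneousComponent n p ∈ Submodule.span R
      {x | ∃ d ≤ n, ∃ s ∈ S d, ∃ h : MvPolynomial σ R, h.IsHomogeneous (n - d) ∧ x = s * h} := by
  suffices ∀ c : MvPolynomial σ R, ∀ n, homogeneousComponent n (c * p) ∈ Submodule.span R
      {x | ∃ d ≤ n, ∃ s ∈ S d, ∃ h : MvPolynomial σ R, h.IsHomogeneous (n - d) ∧ x = s * h} by
    simpa using this 1 n
  induction hp using Submodule.span_induction with
  | mem s hs =>
    obtain ⟨d, hs⟩ := Set.mem_iUnion.1 hs
    intro c n
    rw [homogeneousComponent_mul_of_isHomogeneous (hS d s hs)]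
    split_ifs with hdn
    · exact Submodule.subset_span ⟨d, hdn, s, hs, _, homogeneousComponent_isHomogeneous _ _,
        mul_comm _ _⟩
    · exact zero_mem _
  | zero => simp
  | add x y _ _ hx hy => intro c n; simpa [mul_add] using add_mem (hx c n) (hy c n)
  | smul a x _ hx => intro c n; simpa [mul_left_comm, mul_assoc] using hx (c * a) n

theorem IsHomogeneous.mem_span_X_mul {σ R : Type*} [CommSemiring R] {p : MvPolynomial σ R}
    {m : ℕ} (hp : p.IsHomogeneous (m + 1)) :
    p ∈ Submodule.span R {x | ∃ i, ∃ q : MvPolynomial σ R, q.IsHomogeneous m ∧ x = X i * q} := by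
  rw [p.as_sum]
  refine Submodule.sum_mem _ fun u hu => ?_
  have hdeg : u.degree = m + 1 := by
    rw [Finsupp.degree_eq_weight_one]; exact hp (mem_support_iff.1 hu)
  obtain ⟨i, hi⟩ : ∃ i, i ∈ u.support := by
    by_contra! h
    simp [Finsupp.support_eq_empty.1 (Finset.eq_empty_of_forall_notMem h)] at hdeg
  have hu : Finsupp.single i 1 + (u - Finsupp.single i 1) = u :=
    add_tsub_cancel_of_le (Finsupp.single_le_iff.2 (Nat.one_le_iff_ne_zero.2
      (Finsupp.mem_support_iff.1 hi)))
  refine Submodule.subset_span ⟨i, monomial (u - Finsupp.single i 1) (coeff u p),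
    isHomogeneous_monomial _ ?_, ?_⟩
  · have := congrArg Finsupp.degree hu
    rw [map_add, Finsupp.degree_single] at this
    omega
  · rw [X, monomial_mul, one_mul, hu]

end MvPolynomial

theorem Polynomial.Monic.pow_natDegree_mem {R : Type*} [CommRing R] {I : Ideal R}
    {P : Polynomial R} (hP : P.Monic) {x : R} (hx : P.eval x = 0)
    (hI : ∀ k < P.natDegree, P.coeff k ∈ I) : x ^ P.natDegree ∈ I := by
  rw [Polynomial.eval_eq_sum_range, Finset.sum_range_succ, hP.coeff_natDegree, one_mul,
    add_eq_zero_iff_eq_neg'] at hx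
  rw [hx]
  exact neg_mem (Ideal.sum_mem _ fun k hk => Ideal.mul_mem_right _ _ (hI k (by simpa using hk)))

section algOf

variable {β γ : Type} [Fintype β] [Fintype γ]

theorem algOf_X (f : (α → F) →ₗ[F] (β → F)) (j : α) :
    algOf f (X j) = ∑ i, f (Pi.single j 1) i • X i :=
  aeval_X _ _

theorem algOf_comp [DecidableEq β] (f : (β → F) →ₗ[F] (γ → F)) (g : (α → F) →ₗ[F] (β → F)) :
    (algOf f).comp (algOf g) = algOf (f ∘ₗ g) := by
  refine algHom_ext fun j => ?_
  have hfg : (f ∘ₗ g) (Pi.single j 1) = ∑ k, g (Pi.single j 1) k • f (Pi.single k 1) := by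
    conv_lhs => rw [LinearMap.comp_apply, ← Finset.univ_sum_single (g (Pi.single j 1))]
    simp only [map_sum, ← map_smul, ← Pi.single_smul, smul_eq_mul, mul_one]
  simp only [AlgHom.comp_apply, algOf_X, hfg, map_sum, map_smul, Finset.sum_apply,
    Pi.smul_apply, smul_eq_mul, Finset.smul_sum, smul_smul, Finset.sum_smul]
  exact Finset.sum_comm

theorem algOf_id : algOf (LinearMap.id : (α → F) →ₗ[F] (α → F)) = AlgHom.id F _ := by
  refine algHom_ext fun j => ?_
  simp [algOf_X, Pi.single_apply]

theorem constantCoeff_algOf (f : (α → F) →ₗ[F] (β → F)) (p : MvPolynomial α F) :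
    constantCoeff (algOf f p) = constantCoeff p := by
  have : constantCoeff.comp (algOf f).toRingHom = constantCoeff :=
    ringHom_ext (fun r => by simp) fun j => by simp [algOf_X, smul_eq_C_mul]
  exact DFunLike.congr_fun this p

theorem isHomogeneous_algOf (f : (α → F) →ₗ[F] (β → F)) {p : MvPolynomial α F} {m : ℕ}
    (hp : p.IsHomogeneous m) : (algOf f p).IsHomogeneous m := by
  have hX (j : α) : (∑ i, f (Pi.single j 1) i • X i : MvPolynomial β F).IsHomogeneous 1 :=
    IsHomogeneous.sum _ _ _ fun i _ => by
      rw [smul_eq_C_mul]; exact (isHomogeneous_X F i).C_mul _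
  have h := hp.aeval _ hX
  rw [one_mul] at h
  exact h

theorem algOf_homogeneousComponent (f : (α → F) →ₗ[F] (β → F)) (d : ℕ)
    (p : MvPolynomial α F) :
    algOf f (homogeneousComponent d p) = homogeneousComponent d (algOf f p) := by
  conv_rhs => rw [← sum_homogeneousComponent p, map_sum, map_sum]
  simp_rw [homogeneousComponent_of_mem
    (isHomogeneous_algOf f (homogeneousComponent_isHomogeneous _ p) :
      _ ∈ homogeneousSubmodule _ _ _)]
  rw [Finset.sum_ite_eq]
  split_ifs with h
  · rfl
  · rw [homogeneousComponent_eq_zero _ _ (by simpa using h), map_zero]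

end algOf

section invariants

variable {ρ : Representation F G (α → F)}

theorem algOf_mul_apply (ρ : Representation F G (α → F)) (g h : G) (p : MvPolynomial α F) :
    algOf (ρ g) (algOf (ρ h) p) = algOf (ρ (g * h)) p := by
  rw [map_mul, Module.End.mul_eq_comp, ← algOf_comp]
  rfl

theorem algOf_one_apply (ρ : Representation F G (α → F)) (p : MvPolynomial α F) :
    algOf (ρ 1) p = p := by
  rw [map_one, Module.End.one_eq_id, algOf_id]
  rfl

theorem homogeneousComponent_mem_invariants {p : MvPolynomial α F} (hp : p ∈ invariants ρ)
    (d : ℕ) : homogeneousComponent d p ∈ invariants ρ :=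
  fun g => by rw [algOf_homogeneousComponent, hp g]

theorem hilbertIdeal_le_span_isHomogeneous (ρ : Representation F G (α → F)) :
    hilbertIdeal ρ ≤
      Ideal.span (⋃ d, {f | 0 < d ∧ f ∈ invariants ρ ∧ f.IsHomogeneous d}) := by
  refine Ideal.span_le.2 fun f ⟨hf, hf₀⟩ => ?_
  rw [SetLike.mem_coe, ← sum_homogeneousComponent f]
  refine Ideal.sum_mem _ fun d _ => ?_
  rcases Nat.eq_zero_or_pos d with rfl | hd
  · rw [homogeneousComponent_zero, ← constantCoeff_eq, hf₀, map_zero]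
    exact zero_mem _
  · exact Ideal.subset_span (Set.mem_iUnion.2 ⟨d, hd, homogeneousComponent_mem_invariants hf d,
      homogeneousComponent_isHomogeneous d f⟩)

/-- The degree-`m` component of `S(W)₊^G · S(W)₊`. -/
def invariantMultiples (ρ : Representation F G (α → F)) (m : ℕ) :
    Submodule F (MvPolynomial α F) :=
  Submodule.span F {x | ∃ d < m, ∃ f, (0 < d ∧ f ∈ invariants ρ ∧ f.IsHomogeneous d) ∧
    ∃ h : MvPolynomial α F, h.IsHomogeneous (m - d) ∧ x = f * h}

theorem X_mul_mem_invariantMultiples {q : MvPolynomial α F} {m : ℕ} (hq : q ∈ hilbertIdeal ρ)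
    (hqm : q.IsHomogeneous m) (i : α) : X i * q ∈ invariantMultiples ρ (m + 1) := by
  have hspan := homogeneousComponent_mem_span_of_mem_ideal_span (fun _ _ hf => hf.2.2)
    (hilbertIdeal_le_span_isHomogeneous ρ hq) m
  rw [homogeneousComponent_eq_self hqm] at hspan
  refine (Submodule.span_le (p := (invariantMultiples ρ (m + 1)).comap
    (LinearMap.mulLeft F (X i)))).2 ?_ hspan
  rintro _ ⟨d, hd, f, hf, h, hh, rfl⟩
  refine Submodule.subset_span ⟨d, by omega, f, hf, X i * h, ?_, by
    rw [LinearMap.mulLeft_apply]; ring⟩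
  simpa [Nat.sub_add_comm hd, add_comm] using (isHomogeneous_X F i).mul hh

variable [Fintype G]

def reynolds (ρ : Representation F G (α → F)) : MvPolynomial α F →ₗ[F] MvPolynomial α F :=
  (Fintype.card G : F)⁻¹ • ∑ g : G, (algOf (ρ g)).toLinearMap

theorem reynolds_apply (p : MvPolynomial α F) :
    reynolds ρ p = (Fintype.card G : F)⁻¹ • ∑ g : G, algOf (ρ g) p := by
  simp [reynolds]

theorem reynolds_mem_invariants (p : MvPolynomial α F) : reynolds ρ p ∈ invariants ρ := by
  intro h
  rw [reynolds_apply, map_smul, map_sum]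
  simp_rw [algOf_mul_apply]
  exact congrArg _ (Fintype.sum_equiv (Equiv.mulLeft h) _ _ fun _ => rfl)

theorem reynolds_eq_self (hchar : (Fintype.card G : F) ≠ 0) {p : MvPolynomial α F}
    (hp : p ∈ invariants ρ) : reynolds ρ p = p := by
  rw [reynolds_apply, Finset.sum_congr rfl fun g _ => hp g, Finset.sum_const, Finset.card_univ,
    ← Nat.cast_smul_eq_nsmul F, smul_smul, inv_mul_cancel₀ hchar, one_smul]

theorem reynolds_mul_left {p : MvPolynomial α F} (hp : p ∈ invariants ρ) (q : MvPolynomial α F) :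
    reynolds ρ (p * q) = p * reynolds ρ q := by
  simp only [reynolds_apply, map_mul, hp _, ← Finset.mul_sum, mul_smul_comm]

theorem isHomogeneous_reynolds {p : MvPolynomial α F} {m : ℕ} (hp : p.IsHomogeneous m) :
    (reynolds ρ p).IsHomogeneous m := by
  rw [reynolds_apply, smul_eq_C_mul]
  exact (IsHomogeneous.sum _ _ _ fun g _ => isHomogeneous_algOf _ hp).C_mul _

def orbitPolynomial (ρ : Representation F G (α → F)) (x : MvPolynomial α F) :
    Polynomial (MvPolynomial α F) :=
  ∏ g : G, (Polynomial.X - Polynomial.C (algOf (ρ g) x))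

theorem orbitPolynomial_monic (x : MvPolynomial α F) : (orbitPolynomial ρ x).Monic :=
  Polynomial.monic_prod_of_monic _ _ fun _ _ => Polynomial.monic_X_sub_C _

theorem natDegree_orbitPolynomial (x : MvPolynomial α F) :
    (orbitPolynomial ρ x).natDegree = Fintype.card G := by
  simp [orbitPolynomial]

theorem eval_orbitPolynomial_self (x : MvPolynomial α F) :
    (orbitPolynomial ρ x).eval x = 0 := by
  rw [orbitPolynomial, Polynomial.eval_prod]
  exact Finset.prod_eq_zero (Finset.mem_univ 1) (by
    rw [Polynomial.eval_sub, Polynomial.eval_X, Polynomial.eval_C, algOf_one_apply, sub_self])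

theorem coeff_orbitPolynomial_mem_invariants (x : MvPolynomial α F) (k : ℕ) :
    (orbitPolynomial ρ x).coeff k ∈ invariants ρ := by
  intro h
  have hmap : (orbitPolynomial ρ x).map (algOf (ρ h)).toRingHom = orbitPolynomial ρ x := by
    simp only [orbitPolynomial, Polynomial.map_prod, Polynomial.map_sub, Polynomial.map_X,
      Polynomial.map_C, AlgHom.toRingHom_eq_coe, RingHom.coe_coe, algOf_mul_apply]
    exact Fintype.prod_equiv (Equiv.mulLeft h) _ _ fun _ => rfl
  simpa using congrArg (Polynomial.coeff · k) hmap

theorem constantCoeff_coeff_orbitPolynomial {x : MvPolynomial α F} (hx : constantCoeff x = 0)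
    {k : ℕ} (hk : k < Fintype.card G) : constantCoeff ((orbitPolynomial ρ x).coeff k) = 0 := by
  have hmap : (orbitPolynomial ρ x).map constantCoeff = Polynomial.X ^ Fintype.card G := by
    simp [orbitPolynomial, Polynomial.map_prod, constantCoeff_algOf, hx]
  simpa [Polynomial.coeff_X_pow, hk.ne] using congrArg (Polynomial.coeff · k) hmap

theorem pow_card_mem_hilbertIdeal {x : MvPolynomial α F} (hx : constantCoeff x = 0) :
    x ^ Fintype.card G ∈ hilbertIdeal ρ := by
  rw [← natDegree_orbitPolynomial (ρ := ρ) x]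
  refine (orbitPolynomial_monic x).pow_natDegree_mem (eval_orbitPolynomial_self x) fun k hk => ?_
  rw [natDegree_orbitPolynomial] at hk
  exact Ideal.subset_span ⟨coeff_orbitPolynomial_mem_invariants x k,
    constantCoeff_coeff_orbitPolynomial hx hk⟩

theorem mem_hilbertIdeal_of_isHomogeneous {p : MvPolynomial α F} {d : ℕ}
    (hd : Fintype.card α * (Fintype.card G - 1) < d) (hp : p.IsHomogeneous d) :
    p ∈ hilbertIdeal ρ := by
  rw [p.as_sum]
  refine Ideal.sum_mem _ fun u hu => ?_
  obtain ⟨i, hi⟩ : ∃ i, Fintype.card G ≤ u i := by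
    by_contra! h
    have hdeg : u.degree = d := by
      rw [Finsupp.degree_eq_weight_one]; exact hp (mem_support_iff.1 hu)
    have : u.degree ≤ Fintype.card α * (Fintype.card G - 1) := by
      rw [Finsupp.degree_eq_sum, ← smul_eq_mul, ← Finset.card_univ]
      exact Finset.sum_le_card_nsmul _ _ _ fun i _ => Nat.le_sub_one_of_lt (h i)
    omega
  have hu : monomial u (coeff u p) =
      monomial (u - Finsupp.single i (Fintype.card G)) (coeff u p) * X i ^ Fintype.card G := by
    rw [X_pow_eq_monomial, monomial_mul, mul_one,
      tsub_add_cancel_of_le (Finsupp.single_le_iff.2 hi)]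
  rw [hu]
  exact Ideal.mul_mem_left _ _ (pow_card_mem_hilbertIdeal (constantCoeff_X F i))

theorem bddAbove_degrees_not_mem_hilbertIdeal (ρ : Representation F G (α → F)) :
    BddAbove {d | ∃ p : MvPolynomial α F, p.IsHomogeneous d ∧ p ∉ hilbertIdeal ρ} :=
  ⟨_, fun _ ⟨_, hp, hp'⟩ => not_lt.1 fun hd => hp' (mem_hilbertIdeal_of_isHomogeneous hd hp)⟩

theorem mem_hilbertIdeal_of_coinvTop_lt {p : MvPolynomial α F} {d : ℕ} (hd : coinvTop ρ < d)
    (hp : p.IsHomogeneous d) : p ∈ hilbertIdeal ρ := by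
  by_contra h
  exact hd.not_ge (le_csSup (bddAbove_degrees_not_mem_hilbertIdeal ρ) ⟨p, hp, h⟩)

theorem mem_invariantMultiples_of_coinvTop_lt {p : MvPolynomial α F} {m : ℕ}
    (hm : coinvTop ρ < m) (hp : p.IsHomogeneous (m + 1)) :
    p ∈ invariantMultiples ρ (m + 1) := by
  refine Submodule.span_le.2 ?_ hp.mem_span_X_mul
  rintro _ ⟨i, q, hq, rfl⟩
  exact X_mul_mem_invariantMultiples (mem_hilbertIdeal_of_coinvTop_lt hm hq) hq i

theorem reynolds_mem_of_mem_invariantMultiples (A : Subalgebra F (MvPolynomial α F)) {m : ℕ}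
    (hA : ∀ d < m, ∀ p ∈ invariants ρ, p.IsHomogeneous d → p ∈ A) {x : MvPolynomial α F}
    (hx : x ∈ invariantMultiples ρ m) : reynolds ρ x ∈ A := by
  refine Submodule.span_le (p := (Subalgebra.toSubmodule A).comap (reynolds ρ)) |>.2 ?_ hx
  rintro _ ⟨d, hd, f, ⟨hd₀, hf, hfd⟩, h, hh, rfl⟩
  rw [SetLike.mem_coe, Submodule.mem_comap, Subalgebra.mem_toSubmodule, reynolds_mul_left hf]
  exact mul_mem (hA d hd f hf hfd)
    (hA (m - d) (by omega) _ (reynolds_mem_invariants h) (isHomogeneous_reynolds hh))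

theorem mem_adjoin_of_isHomogeneous (hchar : (Fintype.card G : F) ≠ 0) (m : ℕ)
    {p : MvPolynomial α F} (hp : p ∈ invariants ρ) (hpm : p.IsHomogeneous m) :
    p ∈ Algebra.adjoin F {q | q ∈ invariants ρ ∧ q.totalDegree ≤ coinvTop ρ + 1} := by
  induction m using Nat.strong_induction_on generalizing p with
  | _ m ih =>
    rcases le_or_gt m (coinvTop ρ + 1) with hm | hm
    · exact Algebra.subset_adjoin ⟨hp, hpm.totalDegree_le.trans hm⟩
    · obtain ⟨k, rfl⟩ : ∃ k, m = k + 1 := Nat.exists_eq_add_one.2 (by omega)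
      rw [← reynolds_eq_self hchar hp]
      exact reynolds_mem_of_mem_invariantMultiples _ (fun d hd _ => ih d hd)
        (mem_invariantMultiples_of_coinvTop_lt (by omega) hpm)

theorem genLE_coinvTop_add_one (hchar : (Fintype.card G : F) ≠ 0) :
    genLE ρ (coinvTop ρ + 1) := by
  refine le_antisymm (Algebra.adjoin_le fun p hp => hp.1) fun p hp => ?_
  rw [← sum_homogeneousComponent p]
  exact Subalgebra.sum_mem _ fun d _ => mem_adjoin_of_isHomogeneous hchar d
    (homogeneousComponent_mem_invariants hp d) (homogeneousComponent_isHomogeneous d p)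

end invariants

/-- `β(G,W) ≤ b(G,W) + 1` where `b(G,W)` is the top degree of the
coinvariant algebra. -/
theorem stmt3 {G : Type} [Group G] [Fintype G] {n : ℕ}
    (hchar : (Fintype.card G : F) ≠ 0)
    (ρ : Representation F G (Fin n → F)) :
    noether ρ ≤ coinvTop ρ + 1 :=
  Nat.sInf_le (genLE_coinvTop_add_one hchar)

end
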